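/- arXiv:2509.11933 — 2 statements merged into one kernel-verified Lean document; each statement's English description precedes it below -/
import Mathlib

section
/- Suppose the iterates u_k, v_k from the monotone iteration are nondecreasing in k and satisfy u_k(r) + v_k(r) ≤ w(r) for all k and r, where w is continuous. Then the pointwise limits u(r) = lim_k u_k(r), v(r) = lim_k v_k(r) exist and satisfy the limit integral equations u(r) = α₀ + ∫₀^r t^{1-n} ∫₀^t s^{n-1} p(s) f(u(s),v(s)) ds dt and v(r) = β₀ + ∫₀^r t^{1-n} ∫₀^t s^{n-1} q(s) g(u(s),v(s)) ds dt. -/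
/-!
On `[0, r]` both iterates start at their initial values and increase, so `α₀ ≤ uₖ`, `β₀ ≤ vₖ`
and `uₖ + vₖ ≤ w ≤ W := max_{[0,r]} w` trap `(uₖ, vₖ)` in the compact box
`[α₀, W - β₀] × [β₀, W - α₀]`. Hence `uₖ`, `vₖ` converge, and `p f(uₖ, vₖ)` is uniformly bounded
by some `C` on `[0, r]`. Dominated convergence then passes the limit through the inner integral,
and, since `|t^{-m} ∫₀^t s^m h| ≤ C t`, through the outer one as well. Continuity of the iterates,
which follows by induction, supplies the measurability.
-/

open MeasureTheory Set Filter Topology intervalIntegral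

noncomputable def radialIntegral (m : ℕ) (φ : ℝ → ℝ) (r : ℝ) : ℝ :=
  ∫ t in (0:ℝ)..r, (∫ s in (0:ℝ)..t, s ^ m * φ s) / t ^ m

theorem continuousOn_primitive_Ici {G : ℝ → ℝ}
    (hG : ∀ b, 0 ≤ b → IntervalIntegrable G volume 0 b) :
    ContinuousOn (fun r => ∫ t in (0:ℝ)..r, G t) (Ici 0) := by
  intro x hx
  have hb : (0:ℝ) ≤ x + 1 := by linarith [mem_Ici.1 hx]
  have hIcc : ContinuousOn (fun r => ∫ t in (0:ℝ)..r, G t) (Icc 0 (x + 1)) := by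
    simpa only [uIcc_of_le hb] using continuousOn_primitive_interval' (hG _ hb) left_mem_uIcc
  refine (hIcc x ⟨hx, by linarith⟩).mono_of_mem_nhdsWithin ?_
  rw [← Ici_inter_Iic]
  exact inter_mem_nhdsWithin _ (Iic_mem_nhds (by linarith))

section RadialIntegral

variable {m : ℕ} {φ : ℝ → ℝ}

theorem norm_pow_mul_le_of_mem_Icc {s t C : ℝ} (hs : s ∈ Icc 0 t) (hC : ‖φ s‖ ≤ C) :
    ‖s ^ m * φ s‖ ≤ t ^ m * C := by
  rw [norm_mul, norm_pow, Real.norm_of_nonneg hs.1]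
  exact mul_le_mul (pow_le_pow_left₀ hs.1 hs.2 m) hC (norm_nonneg _)
    (pow_nonneg (hs.1.trans hs.2) m)

theorem norm_integral_pow_mul_div_le {t C : ℝ} (ht : 0 ≤ t) (hC : ∀ s ∈ Icc 0 t, ‖φ s‖ ≤ C) :
    ‖(∫ s in (0:ℝ)..t, s ^ m * φ s) / t ^ m‖ ≤ C * t := by
  rcases ht.eq_or_lt with rfl | ht
  · simp
  have hint : ‖∫ s in (0:ℝ)..t, s ^ m * φ s‖ ≤ t ^ m * C * |t - 0| :=
    norm_integral_le_of_norm_le_const fun s hs => by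
      rw [uIoc_of_le ht.le] at hs
      exact norm_pow_mul_le_of_mem_Icc (Ioc_subset_Icc_self hs) (hC s (Ioc_subset_Icc_self hs))
  rw [sub_zero, abs_of_pos ht] at hint
  rw [norm_div, norm_pow, Real.norm_of_nonneg ht.le, div_le_iff₀ (by positivity)]
  linarith

theorem ContinuousOn.intervalIntegrable_pow_mul (hφ : ContinuousOn φ (Ici 0)) {t : ℝ}
    (ht : 0 ≤ t) : IntervalIntegrable (fun s => s ^ m * φ s) volume 0 t := by
  refine (((continuous_pow m).continuousOn.mul hφ).mono ?_).intervalIntegrable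
  rw [uIcc_of_le ht]
  exact Icc_subset_Ici_self

theorem continuousOn_radialIntegrand (hφ : ContinuousOn φ (Ici 0)) :
    ContinuousOn (fun t => (∫ s in (0:ℝ)..t, s ^ m * φ s) / t ^ m) (Ioi 0) :=
  ((continuousOn_primitive_Ici fun _ hb => hφ.intervalIntegrable_pow_mul hb).mono
    Ioi_subset_Ici_self).div (continuous_pow m).continuousOn fun _ ht => pow_ne_zero m ht.ne'

theorem aestronglyMeasurable_radialIntegrand (hφ : ContinuousOn φ (Ici 0)) {r : ℝ}
    (hr : 0 ≤ r) :
    AEStronglyMeasurable (fun t => (∫ s in (0:ℝ)..t, s ^ m * φ s) / t ^ m)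
      (volume.restrict (uIoc 0 r)) := by
  refine ((continuousOn_radialIntegrand hφ).mono ?_).aestronglyMeasurable measurableSet_uIoc
  rw [uIoc_of_le hr]
  exact Ioc_subset_Ioi_self

theorem intervalIntegrable_radialIntegrand (hφ : ContinuousOn φ (Ici 0)) {b : ℝ} (hb : 0 ≤ b) :
    IntervalIntegrable (fun t => (∫ s in (0:ℝ)..t, s ^ m * φ s) / t ^ m) volume 0 b := by
  obtain ⟨C, hC⟩ := isCompact_Icc.exists_bound_of_continuousOn
    (hφ.mono (Icc_subset_Ici_self : Icc (0:ℝ) b ⊆ _))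
  rw [intervalIntegrable_iff]
  refine IntegrableOn.of_bound measure_Ioc_lt_top (aestronglyMeasurable_radialIntegrand hφ hb)
    (C * b) (ae_restrict_of_forall_mem measurableSet_uIoc fun t ht => ?_)
  rw [uIoc_of_le hb] at ht
  calc _ ≤ C * t := norm_integral_pow_mul_div_le ht.1.le fun s hs => hC s ⟨hs.1, hs.2.trans ht.2⟩
    _ ≤ C * b := mul_le_mul_of_nonneg_left ht.2 ((norm_nonneg _).trans (hC 0 ⟨le_rfl, hb⟩))

theorem continuousOn_radialIntegral (hφ : ContinuousOn φ (Ici 0)) :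
    ContinuousOn (radialIntegral m φ) (Ici 0) :=
  continuousOn_primitive_Ici fun _ hb => intervalIntegrable_radialIntegrand hφ hb

theorem tendsto_radialIntegral {Φ : ℕ → ℝ → ℝ} {C r : ℝ} (hr : 0 ≤ r)
    (hΦ : ∀ k, ContinuousOn (Φ k) (Ici 0)) (hC : ∀ k, ∀ s ∈ Icc 0 r, ‖Φ k s‖ ≤ C)
    (hlim : ∀ s ∈ Icc 0 r, Tendsto (fun k => Φ k s) atTop (𝓝 (φ s))) :
    Tendsto (fun k => radialIntegral m (Φ k) r) atTop (𝓝 (radialIntegral m φ r)) := by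
  have hinner : ∀ t ∈ Ioc 0 r, Tendsto (fun k => ∫ s in (0:ℝ)..t, s ^ m * Φ k s) atTop
      (𝓝 (∫ s in (0:ℝ)..t, s ^ m * φ s)) := by
    intro t ht
    refine tendsto_integral_filter_of_dominated_convergence (fun _ => t ^ m * C)
      (Eventually.of_forall fun k => ((hΦ k).intervalIntegrable_pow_mul ht.1.le).def'.1)
      (Eventually.of_forall fun k => Eventually.of_forall fun s hs => ?_) intervalIntegrable_const
      (Eventually.of_forall fun s hs => ?_)
    all_goals rw [uIoc_of_le ht.1.le] at hs
    · exact norm_pow_mul_le_of_mem_Icc (Ioc_subset_Icc_self hs)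
        (hC k s ⟨hs.1.le, hs.2.trans ht.2⟩)
    · exact (hlim s ⟨hs.1.le, hs.2.trans ht.2⟩).const_mul _
  refine tendsto_integral_filter_of_dominated_convergence (fun t => C * t)
    (Eventually.of_forall fun k => aestronglyMeasurable_radialIntegrand (hΦ k) hr)
    (Eventually.of_forall fun k => Eventually.of_forall fun t ht => ?_)
    ((continuous_const.mul continuous_id).intervalIntegrable 0 r)
    (Eventually.of_forall fun t ht => ?_)
  all_goals rw [uIoc_of_le hr] at ht
  · exact norm_integral_pow_mul_div_le ht.1.le fun s hs => hC k s ⟨hs.1, hs.2.trans ht.2⟩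
  · exact (hinner t ht).div_const _

end RadialIntegral

theorem tendsto_radialIntegral_mul_comp {E : Type*} [TopologicalSpace E] {m : ℕ} {P : ℝ → ℝ}
    {F : E → ℝ} {z : ℕ → ℝ → E} {zlim : ℝ → E} {K : Set E} {r : ℝ} (hr : 0 ≤ r)
    (hP : ContinuousOn P (Ici 0)) (hF : Continuous F) (hz : ∀ k, ContinuousOn (z k) (Ici 0))
    (hK : IsCompact K) (hzK : ∀ k, MapsTo (z k) (Icc 0 r) K)
    (hlim : ∀ s ∈ Icc 0 r, Tendsto (fun k => z k s) atTop (𝓝 (zlim s))) :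
    Tendsto (fun k => radialIntegral m (fun s => P s * F (z k s)) r) atTop
      (𝓝 (radialIntegral m (fun s => P s * F (zlim s)) r)) := by
  obtain ⟨CP, hCP⟩ := isCompact_Icc.exists_bound_of_continuousOn
    (hP.mono (Icc_subset_Ici_self : Icc (0:ℝ) r ⊆ _))
  obtain ⟨CF, hCF⟩ := hK.exists_bound_of_continuousOn hF.continuousOn
  refine tendsto_radialIntegral (C := CP * CF) hr (fun k => hP.mul (hF.comp_continuousOn (hz k)))
    (fun k s hs => ?_) fun s hs => ((hF.tendsto _).comp (hlim s hs)).const_mul _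
  rw [norm_mul]
  exact mul_le_mul (hCP s hs) (hCF _ (hzK k hs)) (norm_nonneg _) ((norm_nonneg _).trans (hCP s hs))

theorem exists_tendsto_of_monotone_of_le {α : Type*} {S : Set α} {x : ℕ → α → ℝ} {b : α → ℝ}
    (hmono : ∀ a ∈ S, Monotone fun k => x k a) (hb : ∀ k, ∀ a ∈ S, x k a ≤ b a) :
    ∃ y : α → ℝ, ∀ a ∈ S, Tendsto (fun k => x k a) atTop (𝓝 (y a)) :=
  ⟨fun a => ⨆ k, x k a, fun a ha =>
    tendsto_atTop_ciSup (hmono a ha) ⟨b a, forall_mem_range.2 fun k => hb k a ha⟩⟩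

theorem exists_isCompact_mapsTo_of_le_of_add_le {ι X : Type*} [TopologicalSpace X] {S : Set X}
    {a b : ι → X → ℝ} {w : X → ℝ} {α₀ β₀ : ℝ} (hS : IsCompact S) (hw : ContinuousOn w S)
    (ha : ∀ k, ∀ s ∈ S, α₀ ≤ a k s) (hb : ∀ k, ∀ s ∈ S, β₀ ≤ b k s)
    (hab : ∀ k, ∀ s ∈ S, a k s + b k s ≤ w s) :
    ∃ K : Set (ℝ × ℝ), IsCompact K ∧ ∀ k, MapsTo (fun s => (a k s, b k s)) S K := by
  obtain ⟨W, hW⟩ := hS.bddAbove_image hw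
  refine ⟨Icc α₀ (W - β₀) ×ˢ Icc β₀ (W - α₀), isCompact_Icc.prod isCompact_Icc, fun k s hs => ?_⟩
  have hwW := hW (mem_image_of_mem w hs)
  have := ha k s hs
  have := hb k s hs
  have := hab k s hs
  exact ⟨⟨by linarith, by linarith⟩, by linarith, by linarith⟩

theorem stmt10_general (n : ℕ) (α₀ β₀ : ℝ)
    (p q : ℝ → ℝ)
    (hp_cont : ContinuousOn p (Ici 0)) (hq_cont : ContinuousOn q (Ici 0))
    (f g : ℝ → ℝ → ℝ)
    (hf_cont : Continuous fun x : ℝ × ℝ => f x.1 x.2)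
    (hg_cont : Continuous fun x : ℝ × ℝ => g x.1 x.2)
    (uk vk : ℕ → ℝ → ℝ)
    (hu0 : ∀ r, uk 0 r = α₀) (hv0 : ∀ r, vk 0 r = β₀)
    (huk : ∀ k r, uk (k + 1) r = α₀ +
      ∫ t in (0:ℝ)..r, (∫ s in (0:ℝ)..t, s ^ (n - 1) * p s * f (uk k s) (vk k s)) / t ^ (n - 1))
    (hvk : ∀ k r, vk (k + 1) r = β₀ +
      ∫ t in (0:ℝ)..r, (∫ s in (0:ℝ)..t, s ^ (n - 1) * q s * g (uk k s) (vk k s)) / t ^ (n - 1))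
    (hmono_u : ∀ r : ℝ, 0 ≤ r → Monotone fun k => uk k r)
    (hmono_v : ∀ r : ℝ, 0 ≤ r → Monotone fun k => vk k r)
    (w : ℝ → ℝ) (hw_cont : Continuous w)
    (hbound : ∀ k : ℕ, ∀ r : ℝ, 0 ≤ r → uk k r + vk k r ≤ w r) :
    ∃ u v : ℝ → ℝ,
      (∀ r : ℝ, 0 ≤ r → Tendsto (fun k => uk k r) atTop (𝓝 (u r))) ∧
      (∀ r : ℝ, 0 ≤ r → Tendsto (fun k => vk k r) atTop (𝓝 (v r))) ∧
      (∀ r : ℝ, 0 ≤ r → u r = α₀ +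
        ∫ t in (0:ℝ)..r, (∫ s in (0:ℝ)..t, s ^ (n - 1) * p s * f (u s) (v s)) / t ^ (n - 1)) ∧
      (∀ r : ℝ, 0 ≤ r → v r = β₀ +
        ∫ t in (0:ℝ)..r, (∫ s in (0:ℝ)..t, s ^ (n - 1) * q s * g (u s) (v s)) / t ^ (n - 1)) := by
  -- after reassociating, every double integral here is `radialIntegral (n - 1) _ r` by definition
  simp only [mul_assoc] at huk hvk ⊢
  have hu_ge (k : ℕ) (s : ℝ) (hs : 0 ≤ s) : α₀ ≤ uk k s := hu0 s ▸ hmono_u s hs k.zero_le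
  have hv_ge (k : ℕ) (s : ℝ) (hs : 0 ≤ s) : β₀ ≤ vk k s := hv0 s ▸ hmono_v s hs k.zero_le
  have hcont (k : ℕ) : ContinuousOn (fun s => (uk k s, vk k s)) (Ici 0) := by
    induction k with
    | zero => simpa only [hu0, hv0] using continuousOn_const
    | succ k ih =>
      simp only [huk, hvk]
      exact (continuousOn_const.add (continuousOn_radialIntegral (hp_cont.mul
        (hf_cont.comp_continuousOn ih)))).prodMk (continuousOn_const.add
        (continuousOn_radialIntegral (hq_cont.mul (hg_cont.comp_continuousOn ih))))
  have hbox (r : ℝ) : ∃ K : Set (ℝ × ℝ), IsCompact K ∧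
      ∀ k, MapsTo (fun s => (uk k s, vk k s)) (Icc 0 r) K :=
    exists_isCompact_mapsTo_of_le_of_add_le isCompact_Icc hw_cont.continuousOn
      (fun k s hs => hu_ge k s hs.1) (fun k s hs => hv_ge k s hs.1) fun k s hs => hbound k s hs.1
  obtain ⟨u, hu⟩ := exists_tendsto_of_monotone_of_le (S := Ici 0) (b := fun s => w s - β₀)
    hmono_u fun k s hs => by linarith [hbound k s hs, hv_ge k s hs]
  obtain ⟨v, hv⟩ := exists_tendsto_of_monotone_of_le (S := Ici 0) (b := fun s => w s - α₀)
    hmono_v fun k s hs => by linarith [hbound k s hs, hu_ge k s hs]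
  refine ⟨u, v, hu, hv, fun r hr => ?_, fun r hr => ?_⟩
  · obtain ⟨K, hK, hmem⟩ := hbox r
    refine tendsto_nhds_unique ((hu r hr).comp (tendsto_add_atTop_nat 1)) ?_
    simp only [Function.comp_def, huk]
    exact tendsto_const_nhds.add (tendsto_radialIntegral_mul_comp (F := fun x : ℝ × ℝ => f x.1 x.2)
      (z := fun k s => (uk k s, vk k s)) hr hp_cont hf_cont hcont hK hmem
      fun s hs => (hu s hs.1).prodMk_nhds (hv s hs.1))
  · obtain ⟨K, hK, hmem⟩ := hbox r
    refine tendsto_nhds_unique ((hv r hr).comp (tendsto_add_atTop_nat 1)) ?_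
    simp only [Function.comp_def, hvk]
    exact tendsto_const_nhds.add (tendsto_radialIntegral_mul_comp (F := fun x : ℝ × ℝ => g x.1 x.2)
      (z := fun k s => (uk k s, vk k s)) hr hq_cont hg_cont hcont hK hmem
      fun s hs => (hu s hs.1).prodMk_nhds (hv s hs.1))

theorem stmt10 (n : ℕ) (hn : 3 ≤ n) (α₀ β₀ : ℝ) (hα₀ : 0 < α₀) (hβ₀ : 0 < β₀)
    (p q : ℝ → ℝ)
    (hp_cont : ContinuousOn p (Ici 0)) (hq_cont : ContinuousOn q (Ici 0))
    (hp_nonneg : ∀ r ∈ Ici (0:ℝ), 0 ≤ p r) (hq_nonneg : ∀ r ∈ Ici (0:ℝ), 0 ≤ q r)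
    (f g : ℝ → ℝ → ℝ)
    (hf_cont : Continuous fun x : ℝ × ℝ => f x.1 x.2)
    (hg_cont : Continuous fun x : ℝ × ℝ => g x.1 x.2)
    (hf_nonneg : ∀ s t : ℝ, 0 ≤ s → 0 ≤ t → 0 ≤ f s t)
    (hg_nonneg : ∀ s t : ℝ, 0 ≤ s → 0 ≤ t → 0 ≤ g s t)
    (hf_mono : ∀ s t s' t' : ℝ, 0 ≤ s → 0 ≤ t → s ≤ s' → t ≤ t' → f s t ≤ f s' t')
    (hg_mono : ∀ s t s' t' : ℝ, 0 ≤ s → 0 ≤ t → s ≤ s' → t ≤ t' → g s t ≤ g s' t')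
    (uk vk : ℕ → ℝ → ℝ)
    (hu0 : ∀ r, uk 0 r = α₀) (hv0 : ∀ r, vk 0 r = β₀)
    (huk : ∀ k r, uk (k + 1) r = α₀ +
      ∫ t in (0:ℝ)..r, (∫ s in (0:ℝ)..t, s ^ (n - 1) * p s * f (uk k s) (vk k s)) / t ^ (n - 1))
    (hvk : ∀ k r, vk (k + 1) r = β₀ +
      ∫ t in (0:ℝ)..r, (∫ s in (0:ℝ)..t, s ^ (n - 1) * q s * g (uk k s) (vk k s)) / t ^ (n - 1))
    (hmono_u : ∀ r : ℝ, 0 ≤ r → Monotone fun k => uk k r)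
    (hmono_v : ∀ r : ℝ, 0 ≤ r → Monotone fun k => vk k r)
    (w : ℝ → ℝ) (hw_cont : Continuous w)
    (hbound : ∀ k : ℕ, ∀ r : ℝ, 0 ≤ r → uk k r + vk k r ≤ w r) :
    ∃ u v : ℝ → ℝ,
      (∀ r : ℝ, 0 ≤ r → Tendsto (fun k => uk k r) atTop (𝓝 (u r))) ∧
      (∀ r : ℝ, 0 ≤ r → Tendsto (fun k => vk k r) atTop (𝓝 (v r))) ∧
      (∀ r : ℝ, 0 ≤ r → u r = α₀ +
        ∫ t in (0:ℝ)..r, (∫ s in (0:ℝ)..t, s ^ (n - 1) * p s * f (u s) (v s)) / t ^ (n - 1)) ∧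
      (∀ r : ℝ, 0 ≤ r → v r = β₀ +
        ∫ t in (0:ℝ)..r, (∫ s in (0:ℝ)..t, s ^ (n - 1) * q s * g (u s) (v s)) / t ^ (n - 1)) :=
  stmt10_general n α₀ β₀ p q hp_cont hq_cont f g hf_cont hg_cont uk vk hu0 hv0 huk hvk hmono_u
    hmono_v w hw_cont hbound
end

section
/- Let y : [R₀, R_a) → (0,∞) be C² with y(R₀) = a > s*, y'(R₀) = 0, satisfying y'' + (n-1)y'/r = p(r)·ℓ(y(r)) where ℓ is continuous, positive, and nondecreasing on [s*,∞). Set C(s) = ∫_{s*}^s dτ/ℓ(τ). Then for all r ∈ [R₀, R_a), C(y(r)) ≤ C(a) + ∫_{R₀}^r t^{1-n}(∫_{R₀}^t s^{n-1} p(s) ds) dt. -/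
open MeasureTheory Set Filter Topology intervalIntegral

/-!
The flux `w(t) = t^(n-1) y'(t)` satisfies `w' = t^(n-1) p ℓ(y) ≥ 0` and `w(R₀) = 0`, so `y' ≥ 0`
and `y` is nondecreasing. As `ℓ` is nondecreasing, `ℓ(y(s)) ≤ ℓ(y(t))` for `s ≤ t`, whence
`w(t) ≤ ℓ(y(t)) ∫_{R₀}^t s^(n-1) p(s) ds`. Dividing by `t^(n-1) ℓ(y(t))` bounds
`(C ∘ y)' = y' / ℓ(y)`, and integrating from `R₀` gives the claim.
-/

section Calculus

variable {a b : ℝ} {g g' φ : ℝ → ℝ}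

lemma monotoneOn_Icc_of_hasDerivAt_nonneg (hg : ∀ x ∈ Icc a b, HasDerivAt g (g' x) x)
    (hg' : ∀ x ∈ Ioo a b, 0 ≤ g' x) : MonotoneOn g (Icc a b) := by
  refine monotoneOn_of_hasDerivWithinAt_nonneg (f' := g') (convex_Icc a b)
    (fun x hx => (hg x hx).continuousAt.continuousWithinAt) (fun x hx => ?_) (fun x hx => ?_)
  · rw [interior_Icc] at hx ⊢
    exact (hg x (Ioo_subset_Icc_self hx)).hasDerivWithinAt
  · exact hg' x (interior_Icc (a := a) ▸ hx)

lemma sub_le_integral_of_hasDerivAt_of_le (hab : a ≤ b)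
    (hg : ∀ x ∈ Icc a b, HasDerivAt g (g' x) x) (hφ : IntegrableOn φ (Icc a b))
    (hle : ∀ x ∈ Ioo a b, g' x ≤ φ x) : g b - g a ≤ ∫ x in a..b, φ x :=
  sub_le_integral_of_hasDeriv_right_of_le hab
    (fun x hx => (hg x hx).continuousAt.continuousWithinAt)
    (fun x hx => (hg x (Ioo_subset_Icc_self hx)).hasDerivWithinAt) hφ hle

lemma hasDerivAt_integral_of_continuousOn_Ici {f : ℝ → ℝ} {s₀ x : ℝ}
    (hf : ContinuousOn f (Ici s₀)) (hx : s₀ < x) :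
    HasDerivAt (fun s => ∫ τ in s₀..s, f τ) (f x) x :=
  integral_hasDerivAt_right
    ((hf.mono (uIcc_of_le hx.le ▸ Icc_subset_Ici_self)).intervalIntegrable)
    ((hf.mono Ioi_subset_Ici_self).stronglyMeasurableAtFilter isOpen_Ioi x hx)
    (hf.continuousAt (Ici_mem_nhds hx))

lemma continuousOn_primitive_of_continuousOn (hab : a ≤ b) (hφ : ContinuousOn φ (Icc a b)) :
    ContinuousOn (fun t => ∫ s in a..t, φ s) (Icc a b) := by
  have h : IntegrableOn φ (uIcc a b) := uIcc_of_le hab ▸ hφ.integrableOn_Icc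
  simpa only [uIcc_of_le hab] using continuousOn_primitive_interval h

end Calculus

lemma hasDerivAt_pow_mul_of_radial_ode {u : ℝ → ℝ} {f r : ℝ} (m : ℕ) (hr : r ≠ 0)
    (hu : HasDerivAt u (f - m / r * u r) r) :
    HasDerivAt (fun t => t ^ m * u t) (r ^ m * f) r := by
  refine ((hasDerivAt_pow m r).mul hu).congr_deriv ?_
  rcases m with _ | m
  · simp
  · simp only [Nat.cast_succ, Nat.add_sub_cancel, pow_succ]
    field_simp
    ring

lemma HasDerivAt.integral_one_div_comp {ℓ y : ℝ → ℝ} {y' s₀ t : ℝ}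
    (hℓ : ContinuousOn ℓ (Ici s₀)) (hℓ_pos : ∀ s ∈ Ici s₀, 0 < ℓ s) (hy : HasDerivAt y y' t)
    (ht : s₀ < y t) : HasDerivAt (fun t => ∫ τ in s₀..y t, 1 / ℓ τ) (y' / ℓ (y t)) t :=
  ((hasDerivAt_integral_of_continuousOn_Ici
    (continuousOn_const.div hℓ fun s hs => (hℓ_pos s hs).ne') ht).comp t hy).congr_deriv
    (one_div_mul_eq_div _ _)

section Flux

variable {m : ℕ} {R₀ r : ℝ} {u q p g : ℝ → ℝ}

lemma nonneg_of_hasDerivAt_pow_mul (hR₀ : 0 < R₀) (hu : u R₀ = 0)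
    (hw : ∀ t ∈ Icc R₀ r, HasDerivAt (fun t => t ^ m * u t) (t ^ m * q t) t)
    (hq : ∀ t ∈ Ioo R₀ r, 0 ≤ q t) : ∀ t ∈ Icc R₀ r, 0 ≤ u t := by
  intro t ht
  have hmono := monotoneOn_Icc_of_hasDerivAt_nonneg hw
    fun s hs => mul_nonneg (pow_nonneg (hR₀.trans hs.1).le m) (hq s hs)
  have h := hmono ⟨le_rfl, ht.1.trans ht.2⟩ ht ht.1
  simp only [hu, mul_zero] at h
  exact nonneg_of_mul_nonneg_right h (pow_pos (hR₀.trans_le ht.1) m)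

lemma monotoneOn_of_hasDerivAt_pow_mul_deriv {y : ℝ → ℝ} (hR₀ : 0 < R₀) (hu : u R₀ = 0)
    (hy : ∀ t ∈ Icc R₀ r, HasDerivAt y (u t) t)
    (hw : ∀ t ∈ Icc R₀ r, HasDerivAt (fun t => t ^ m * u t) (t ^ m * q t) t)
    (hq : ∀ t ∈ Ioo R₀ r, 0 ≤ q t) : MonotoneOn y (Icc R₀ r) :=
  monotoneOn_Icc_of_hasDerivAt_nonneg hy fun t ht =>
    nonneg_of_hasDerivAt_pow_mul hR₀ hu hw hq t (Ioo_subset_Icc_self ht)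

lemma pow_mul_le_integral_mul_of_monotoneOn (hR₀ : 0 < R₀) (hu : u R₀ = 0)
    (hw : ∀ t ∈ Icc R₀ r, HasDerivAt (fun t => t ^ m * u t) (t ^ m * (p t * g t)) t)
    (hp : ContinuousOn p (Icc R₀ r)) (hp₀ : ∀ t ∈ Icc R₀ r, 0 ≤ p t)
    (hg : MonotoneOn g (Icc R₀ r)) :
    ∀ t ∈ Icc R₀ r, t ^ m * u t ≤ (∫ s in R₀..t, s ^ m * p s) * g t := by
  intro t ht
  have hsub : Icc R₀ t ⊆ Icc R₀ r := Icc_subset_Icc_right ht.2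
  have h := sub_le_integral_of_hasDerivAt_of_le (φ := fun s => s ^ m * p s * g t) ht.1
    (fun s hs => hw s (hsub hs))
    (((continuous_pow m).continuousOn.mul (hp.mono hsub)).mul continuousOn_const
      |>.integrableOn_Icc)
    fun s hs => by
      rw [← mul_assoc]
      exact mul_le_mul_of_nonneg_left (hg (hsub (Ioo_subset_Icc_self hs)) ht hs.2.le)
        (mul_nonneg (pow_nonneg (hR₀.trans hs.1).le m) (hp₀ s (hsub (Ioo_subset_Icc_self hs))))
  simpa [hu, intervalIntegral.integral_mul_const] using h

lemma div_le_integral_div_pow_of_monotoneOn (hR₀ : 0 < R₀) (hu : u R₀ = 0)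
    (hw : ∀ t ∈ Icc R₀ r, HasDerivAt (fun t => t ^ m * u t) (t ^ m * (p t * g t)) t)
    (hp : ContinuousOn p (Icc R₀ r)) (hp₀ : ∀ t ∈ Icc R₀ r, 0 ≤ p t)
    (hg : MonotoneOn g (Icc R₀ r)) (hg₀ : ∀ t ∈ Icc R₀ r, 0 < g t) :
    ∀ t ∈ Icc R₀ r, u t / g t ≤ (∫ s in R₀..t, s ^ m * p s) / t ^ m := by
  intro t ht
  rw [div_le_div_iff₀ (hg₀ t ht) (pow_pos (hR₀.trans_le ht.1) m)]
  linarith [pow_mul_le_integral_mul_of_monotoneOn hR₀ hu hw hp hp₀ hg t ht]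

end Flux

theorem stmt13_general (n : ℕ) (hn : 3 ≤ n) (R₀ Ra : ℝ) (hR₀ : 0 < R₀)
    (p : ℝ → ℝ) (hp_cont : ContinuousOn p (Ici 0))
    (hp_nonneg : ∀ r ∈ Ici (0:ℝ), 0 ≤ p r)
    (sstar a : ℝ)
    (ℓ : ℝ → ℝ) (hℓ_cont : ContinuousOn ℓ (Ici sstar))
    (hℓ_pos : ∀ s ∈ Ici sstar, 0 < ℓ s) (hℓ_mono : MonotoneOn ℓ (Ici sstar))
    (C : ℝ → ℝ) (hC : ∀ s, C s = ∫ τ in sstar..s, 1 / ℓ τ)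
    (y y' : ℝ → ℝ)
    (hy_pos : ∀ r ∈ Ico R₀ Ra, sstar < y r)
    (hy0 : y R₀ = a) (hy'0 : y' R₀ = 0)
    (hyd : ∀ r ∈ Ico R₀ Ra, HasDerivAt y (y' r) r)
    (hy'd : ∀ r ∈ Ico R₀ Ra,
      HasDerivAt y' (p r * ℓ (y r) - ((n : ℝ) - 1) / r * y' r) r) :
    ∀ r ∈ Ico R₀ Ra,
      C (y r) ≤ C a +
        ∫ t in R₀..r, (∫ s in R₀..t, s ^ (n - 1) * p s) / t ^ (n - 1) := by
  intro r ⟨hR₀r, hrRa⟩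
  have hI : Icc R₀ r ⊆ Ico R₀ Ra := Icc_subset_Ico_right hrRa
  have hpos : ∀ t ∈ Icc R₀ r, 0 < t := fun t ht => hR₀.trans_le ht.1
  have hp : ContinuousOn p (Icc R₀ r) := hp_cont.mono fun t ht => (hpos t ht).le
  have hp₀ : ∀ t ∈ Icc R₀ r, 0 ≤ p t := fun t ht => hp_nonneg t (hpos t ht).le
  have hℓy : ∀ t ∈ Icc R₀ r, 0 < ℓ (y t) := fun t ht => hℓ_pos _ (hy_pos t (hI ht)).le
  have hw : ∀ t ∈ Icc R₀ r,
      HasDerivAt (fun t => t ^ (n - 1) * y' t) (t ^ (n - 1) * (p t * ℓ (y t))) t :=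
    fun t ht => hasDerivAt_pow_mul_of_radial_ode _ (hpos t ht).ne' <| by
      rw [Nat.cast_pred (by omega)]; exact hy'd t (hI ht)
  have hy_mono := monotoneOn_of_hasDerivAt_pow_mul_deriv hR₀ hy'0 (fun t ht => hyd t (hI ht)) hw
    fun t ht => mul_nonneg (hp₀ t (Ioo_subset_Icc_self ht)) (hℓy t (Ioo_subset_Icc_self ht)).le
  have hbound := div_le_integral_div_pow_of_monotoneOn hR₀ hy'0 hw hp hp₀
    (hℓ_mono.comp hy_mono fun t ht => (hy_pos t (hI ht)).le) hℓy
  have hint : IntegrableOn (fun t => (∫ s in R₀..t, s ^ (n - 1) * p s) / t ^ (n - 1)) (Icc R₀ r) :=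
    ((continuousOn_primitive_of_continuousOn hR₀r ((continuous_pow _).continuousOn.mul hp)).div
      (continuous_pow _).continuousOn fun t ht => (pow_pos (hpos t ht) _).ne').integrableOn_Icc
  have hCy := sub_le_integral_of_hasDerivAt_of_le hR₀r
    (fun t ht => (hyd t (hI ht)).integral_one_div_comp hℓ_cont hℓ_pos (hy_pos t (hI ht))) hint
    fun t ht => hbound t (Ioo_subset_Icc_self ht)
  simp only [← hC, hy0] at hCy
  linarith

theorem stmt13 (n : ℕ) (hn : 3 ≤ n) (R₀ Ra : ℝ) (hR₀ : 0 < R₀) (hRa : R₀ < Ra)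
    (p : ℝ → ℝ) (hp_cont : ContinuousOn p (Ici 0))
    (hp_nonneg : ∀ r ∈ Ici (0:ℝ), 0 ≤ p r)
    (sstar a : ℝ) (hsstar : 0 < sstar) (ha : sstar < a)
    (ℓ : ℝ → ℝ) (hℓ_cont : ContinuousOn ℓ (Ici sstar))
    (hℓ_pos : ∀ s ∈ Ici sstar, 0 < ℓ s) (hℓ_mono : MonotoneOn ℓ (Ici sstar))
    (C : ℝ → ℝ) (hC : ∀ s, C s = ∫ τ in sstar..s, 1 / ℓ τ)
    (y y' : ℝ → ℝ)
    (hy_pos : ∀ r ∈ Ico R₀ Ra, sstar < y r)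
    (hy0 : y R₀ = a) (hy'0 : y' R₀ = 0)
    (hyd : ∀ r ∈ Ico R₀ Ra, HasDerivAt y (y' r) r)
    (hy'd : ∀ r ∈ Ico R₀ Ra,
      HasDerivAt y' (p r * ℓ (y r) - ((n : ℝ) - 1) / r * y' r) r) :
    ∀ r ∈ Ico R₀ Ra,
      C (y r) ≤ C a +
        ∫ t in R₀..r, (∫ s in R₀..t, s ^ (n - 1) * p s) / t ^ (n - 1) :=
  stmt13_general n hn R₀ Ra hR₀ p hp_cont hp_nonneg sstar a ℓ hℓ_cont hℓ_pos hℓ_mono C hC y y'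
    hy_pos hy0 hy'0 hyd hy'd
end
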